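/- arXiv:2508.19945 — 2 statements merged into one kernel-verified Lean document; each statement's English description precedes it below -/
import Mathlib

section
/- Limitations of learnability (Theorem 3, forward direction): suppose the unknown constraints split as g¬k = (g¬k⁽¹⁾, g¬k⁽²⁾) and that every point satisfying h(ξ)=0, g_k(ξ)≤0, g¬k⁽¹⁾(ξ,θ*)≤0 strictly satisfies g¬k⁽²⁾(ξ,θ*)<0. Let θ satisfy g¬k⁽¹⁾(·,θ) = g¬k⁽¹⁾(·,θ*) and also: every point satisfying h(ξ)=0, g_k(ξ)≤0, g¬k⁽¹⁾(ξ,θ*)≤0 strictly satisfies g¬k⁽²⁾(ξ,θ)<0. Then every trajectory at local Nash stationarity under θ is also at local Nash stationarity under θ*, i.e., D(θ) ⊆ D(θ*). -/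
/-- The joint trajectory space: one component per agent. -/
abbrev Traj {N : ℕ} (E : Fin N → Type*) := ∀ i, E i

/-- The partial derivative (Fréchet derivative) of `f : Traj E → ℝ` with
respect to agent `i`'s component, evaluated at `ξ`: the derivative at `ξ i`
of `y ↦ f (ξ with i-th component replaced by y)`. -/
noncomputable def agentGrad {N : ℕ} {E : Fin N → Type*}
    [∀ i, NormedAddCommGroup (E i)] [∀ i, NormedSpace ℝ (E i)]
    (i : Fin N) (f : Traj E → ℝ) (ξ : Traj E) : E i →L[ℝ] ℝ :=
  fderiv ℝ (fun y : E i => f (Function.update ξ i y)) (ξ i)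

/-- `NashStationary` : ξ is at local Nash stationarity (satisfies the KKT
conditions of every agent) for parameter `θ`, costs `J`, equality constraints
`h`, known inequality constraints `gk`, and unknown inequality constraints
`g1`, `g2` (a partition of g¬k). -/
def NashStationary {N : ℕ} {E : Fin N → Type*}
    [∀ i, NormedAddCommGroup (E i)] [∀ i, NormedSpace ℝ (E i)]
    {Θ : Type*} {nh ngk ng1 ng2 : Fin N → ℕ}
    (J : ∀ _ : Fin N, Traj E → ℝ)
    (h : ∀ i : Fin N, Traj E → Fin (nh i) → ℝ)
    (gk : ∀ i : Fin N, Traj E → Fin (ngk i) → ℝ)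
    (g1 : ∀ i : Fin N, Traj E → Θ → Fin (ng1 i) → ℝ)
    (g2 : ∀ i : Fin N, Traj E → Θ → Fin (ng2 i) → ℝ)
    (θ : Θ) (ξ : Traj E) : Prop :=
  ∀ i : Fin N,
    ∃ (lamk : Fin (ngk i) → ℝ) (lam1 : Fin (ng1 i) → ℝ)
      (lam2 : Fin (ng2 i) → ℝ) (nu : Fin (nh i) → ℝ),
      -- primal feasibility
      (∀ β, h i ξ β = 0) ∧ (∀ β, gk i ξ β ≤ 0) ∧
      (∀ β, g1 i ξ θ β ≤ 0) ∧ (∀ β, g2 i ξ θ β ≤ 0) ∧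
      -- dual feasibility
      (∀ β, 0 ≤ lamk β) ∧ (∀ β, 0 ≤ lam1 β) ∧ (∀ β, 0 ≤ lam2 β) ∧
      -- complementary slackness
      (∀ β, lamk β * gk i ξ β = 0) ∧
      (∀ β, lam1 β * g1 i ξ θ β = 0) ∧
      (∀ β, lam2 β * g2 i ξ θ β = 0) ∧
      -- stationarity
      (agentGrad i (J i) ξ
        + ∑ β, lamk β • agentGrad i (fun ξ' => gk i ξ' β) ξ
        + ∑ β, lam1 β • agentGrad i (fun ξ' => g1 i ξ' θ β) ξ
        + ∑ β, lam2 β • agentGrad i (fun ξ' => g2 i ξ' θ β) ξ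
        + ∑ β, nu β • agentGrad i (fun ξ' => h i ξ' β) ξ = 0)

/-- Limitations of learnability (forward direction).
If (i) the constraint `g¬k⁽²⁾(·,θ*) ≤ 0` is strictly subsumed by the remaining
constraints at `θ*`, (ii) `g¬k⁽¹⁾(·,θ) = g¬k⁽¹⁾(·,θ*)`, and (iii)
`g¬k⁽²⁾(·,θ) ≤ 0` is also strictly subsumed by the same remaining constraints,
then `D(θ) ⊆ D(θ*)`: every trajectory at local Nash stationarity under `θ`
is also at local Nash stationarity under `θ*`. -/
theorem limitations_of_learnability_forward
    {N : ℕ} {E : Fin N → Type*}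
    [∀ i, NormedAddCommGroup (E i)] [∀ i, NormedSpace ℝ (E i)]
    {Θ : Type*} {nh ngk ng1 ng2 : Fin N → ℕ}
    (J : ∀ _ : Fin N, Traj E → ℝ)
    (h : ∀ i : Fin N, Traj E → Fin (nh i) → ℝ)
    (gk : ∀ i : Fin N, Traj E → Fin (ngk i) → ℝ)
    (g1 : ∀ i : Fin N, Traj E → Θ → Fin (ng1 i) → ℝ)
    (g2 : ∀ i : Fin N, Traj E → Θ → Fin (ng2 i) → ℝ)
    (θstar θ : Θ)
    -- all functions are differentiable
    (hJdiff : ∀ i, Differentiable ℝ (J i))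
    (hhdiff : ∀ i β, Differentiable ℝ (fun ξ => h i ξ β))
    (hgkdiff : ∀ i β, Differentiable ℝ (fun ξ => gk i ξ β))
    (hg1diff : ∀ i ϑ β, Differentiable ℝ (fun ξ => g1 i ξ ϑ β))
    (hg2diff : ∀ i ϑ β, Differentiable ℝ (fun ξ => g2 i ξ ϑ β))
    -- (i) g2(·,θ*) is strictly looser than the remaining constraints
    (hsubstar : ∀ ξ : Traj E,
      (∀ i β, h i ξ β = 0) → (∀ i β, gk i ξ β ≤ 0) →
      (∀ i β, g1 i ξ θstar β ≤ 0) → ∀ i β, g2 i ξ θstar β < 0)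
    -- (ii) g1 is the same under θ and θ*
    (hg1eq : ∀ i (ξ : Traj E) β, g1 i ξ θ β = g1 i ξ θstar β)
    -- (iii) g2(·,θ) is strictly looser than the remaining constraints
    (hsub : ∀ ξ : Traj E,
      (∀ i β, h i ξ β = 0) → (∀ i β, gk i ξ β ≤ 0) →
      (∀ i β, g1 i ξ θstar β ≤ 0) → ∀ i β, g2 i ξ θ β < 0) :
    {ξ : Traj E | NashStationary J h gk g1 g2 θ ξ} ⊆
      {ξ : Traj E | NashStationary J h gk g1 g2 θstar ξ} := by
  intro ξ hξ
  simp only [Set.mem_setOf_eq] at hξ ⊢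
  -- global feasibility
  have hfeas_h : ∀ i β, h i ξ β = 0 := fun i β => (hξ i).choose_spec.choose_spec.choose_spec.choose_spec.1 β
  have hfeas_gk : ∀ i β, gk i ξ β ≤ 0 := fun i β => (hξ i).choose_spec.choose_spec.choose_spec.choose_spec.2.1 β
  have hfeas_g1 : ∀ i β, g1 i ξ θstar β ≤ 0 := fun i β => by
    rw [← hg1eq]; exact (hξ i).choose_spec.choose_spec.choose_spec.choose_spec.2.2.1 β
  have hg2star : ∀ i β, g2 i ξ θstar β < 0 := hsubstar ξ hfeas_h hfeas_gk hfeas_g1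
  have hg2θ : ∀ i β, g2 i ξ θ β < 0 := hsub ξ hfeas_h hfeas_gk hfeas_g1
  intro i
  obtain ⟨lamk, lam1, lam2, nu, hh, hgk, hg1, hg2, hlk, hl1, hl2, hck, hc1, hc2, hst⟩ := hξ i
  have hlam2zero : ∀ β, lam2 β = 0 := by
    intro β
    by_contra hne
    have := hc2 β
    have hpos : 0 < lam2 β := lt_of_le_of_ne (hl2 β) (Ne.symm hne)
    nlinarith [hg2θ i β]
  refine ⟨lamk, lam1, fun _ => 0, nu, hh, hgk, fun β => by rw [← hg1eq]; exact hg1 β,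
    fun β => (hg2star i β).le, hlk, hl1, fun _ => le_refl 0, hck,
    fun β => by rw [← hg1eq]; exact hc1 β, fun β => by ring, ?_⟩
  have hgrad1 : ∀ β, agentGrad i (fun ξ' => g1 i ξ' θstar β) ξ
      = agentGrad i (fun ξ' => g1 i ξ' θ β) ξ := by
    intro β
    unfold agentGrad
    congr 1
    funext y
    exact (hg1eq i _ β).symm
  have h2 : (∑ β : Fin (ng2 i), (fun _ => (0:ℝ)) β • agentGrad i (fun ξ' => g2 i ξ' θstar β) ξ)
      = ∑ β, lam2 β • agentGrad i (fun ξ' => g2 i ξ' θ β) ξ := by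
    simp [hlam2zero]
  simp only [hgrad1, h2]
  exact hst
end

section
/- Limitations of learnability (Theorem 3, full statement): under the hypotheses that (i) g¬k⁽¹⁾(·, θ) = g¬k⁽¹⁾(·, θ*), (ii) every trajectory satisfying h(ξ)=0, g_k(ξ)≤0, g¬k⁽¹⁾(ξ,θ*)≤0 satisfies g¬k⁽²⁾(ξ,θ*)<0, and (iii) every such trajectory also satisfies g¬k⁽²⁾(ξ,θ)<0, the sets of local Nash stationary trajectories coincide: D(θ*) = D(θ). -/
/-- Limitations of learnability (Theorem 3, full statement).
If (i) the constraint `g¬k⁽²⁾(·,θ*) ≤ 0` is strictly subsumed by the remaining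
constraints at `θ*`, (ii) `g¬k⁽¹⁾(·,θ) = g¬k⁽¹⁾(·,θ*)`, and (iii)
`g¬k⁽²⁾(·,θ) ≤ 0` is also strictly subsumed by the same remaining constraints,
then `D(θ*) = D(θ)`: the sets of local Nash stationary trajectories
is also at local Nash stationarity under `θ*`. -/
theorem limitations_of_learnability
    {N : ℕ} {E : Fin N → Type*}
    [∀ i, NormedAddCommGroup (E i)] [∀ i, NormedSpace ℝ (E i)]
    {Θ : Type*} {nh ngk ng1 ng2 : Fin N → ℕ}
    (J : ∀ _ : Fin N, Traj E → ℝ)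
    (h : ∀ i : Fin N, Traj E → Fin (nh i) → ℝ)
    (gk : ∀ i : Fin N, Traj E → Fin (ngk i) → ℝ)
    (g1 : ∀ i : Fin N, Traj E → Θ → Fin (ng1 i) → ℝ)
    (g2 : ∀ i : Fin N, Traj E → Θ → Fin (ng2 i) → ℝ)
    (θstar θ : Θ)
    -- all functions are differentiable
    (hJdiff : ∀ i, Differentiable ℝ (J i))
    (hhdiff : ∀ i β, Differentiable ℝ (fun ξ => h i ξ β))
    (hgkdiff : ∀ i β, Differentiable ℝ (fun ξ => gk i ξ β))
    (hg1diff : ∀ i ϑ β, Differentiable ℝ (fun ξ => g1 i ξ ϑ β))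
    (hg2diff : ∀ i ϑ β, Differentiable ℝ (fun ξ => g2 i ξ ϑ β))
    -- (i) g2(·,θ*) is strictly looser than the remaining constraints
    (hsubstar : ∀ ξ : Traj E,
      (∀ i β, h i ξ β = 0) → (∀ i β, gk i ξ β ≤ 0) →
      (∀ i β, g1 i ξ θstar β ≤ 0) → ∀ i β, g2 i ξ θstar β < 0)
    -- (ii) g1 is the same under θ and θ*
    (hg1eq : ∀ i (ξ : Traj E) β, g1 i ξ θ β = g1 i ξ θstar β)
    -- (iii) g2(·,θ) is strictly looser than the remaining constraints
    (hsub : ∀ ξ : Traj E,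
      (∀ i β, h i ξ β = 0) → (∀ i β, gk i ξ β ≤ 0) →
      (∀ i β, g1 i ξ θstar β ≤ 0) → ∀ i β, g2 i ξ θ β < 0) :
    {ξ : Traj E | NashStationary J h gk g1 g2 θstar ξ} =
      {ξ : Traj E | NashStationary J h gk g1 g2 θ ξ} := by
  ext ξ
  simp only [Set.mem_setOf_eq]
  constructor
  · intro hs
    have hH : ∀ i β, h i ξ β = 0 := fun i => (hs i).choose_spec.choose_spec.choose_spec.choose_spec.1
    have hGk : ∀ i β, gk i ξ β ≤ 0 := fun i => (hs i).choose_spec.choose_spec.choose_spec.choose_spec.2.1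
    have hG1 : ∀ i β, g1 i ξ θstar β ≤ 0 := fun i => (hs i).choose_spec.choose_spec.choose_spec.choose_spec.2.2.1
    have hG2s : ∀ i β, g2 i ξ θstar β < 0 := hsubstar ξ hH hGk hG1
    have hG2 : ∀ i β, g2 i ξ θ β < 0 := hsub ξ hH hGk hG1
    intro i
    obtain ⟨lamk, lam1, lam2, nu, h1, h2, h3, h4, h5, h6, h7, h8, h9, h10, hst⟩ := hs i
    have hlam2 : ∀ β, lam2 β = 0 := by
      intro β
      rcases mul_eq_zero.1 (h10 β) with hc | hc
      · exact hc
      · exact absurd hc (ne_of_lt (hG2s i β))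
    refine ⟨lamk, lam1, 0, nu, h1, h2, fun β => (hg1eq i ξ β) ▸ h3 β, fun β => (hG2 i β).le,
      h5, h6, fun β => le_refl 0, h8, fun β => by rw [hg1eq i ξ β]; exact h9 β,
      fun β => by simp, ?_⟩
    have hgrad1 : ∀ β, agentGrad i (fun ξ' => g1 i ξ' θ β) ξ
        = agentGrad i (fun ξ' => g1 i ξ' θstar β) ξ := by
      intro β
      unfold agentGrad
      congr 1
      ext y
      exact hg1eq i _ β
    have hz2 : (∑ β, lam2 β • agentGrad i (fun ξ' => g2 i ξ' θstar β) ξ) = 0 := by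
      apply Finset.sum_eq_zero
      intro β _
      rw [hlam2 β, zero_smul]
    have hz2' : (∑ β, (0 : Fin (ng2 i) → ℝ) β • agentGrad i (fun ξ' => g2 i ξ' θ β) ξ) = 0 := by
      apply Finset.sum_eq_zero
      intro β _
      simp
    rw [hz2'] at *
    simp only [hgrad1]
    rw [hz2] at hst
    simpa using hst
  · intro hs
    have hH : ∀ i β, h i ξ β = 0 := fun i => (hs i).choose_spec.choose_spec.choose_spec.choose_spec.1
    have hGk : ∀ i β, gk i ξ β ≤ 0 := fun i => (hs i).choose_spec.choose_spec.choose_spec.choose_spec.2.1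
    have hG1 : ∀ i β, g1 i ξ θstar β ≤ 0 := fun i β =>
      (hg1eq i ξ β) ▸ (hs i).choose_spec.choose_spec.choose_spec.choose_spec.2.2.1 β
    have hG2s : ∀ i β, g2 i ξ θstar β < 0 := hsubstar ξ hH hGk hG1
    have hG2 : ∀ i β, g2 i ξ θ β < 0 := hsub ξ hH hGk hG1
    intro i
    obtain ⟨lamk, lam1, lam2, nu, h1, h2, h3, h4, h5, h6, h7, h8, h9, h10, hst⟩ := hs i
    have hlam2 : ∀ β, lam2 β = 0 := by
      intro β
      rcases mul_eq_zero.1 (h10 β) with hc | hc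
      · exact hc
      · exact absurd hc (ne_of_lt (hG2 i β))
    refine ⟨lamk, lam1, 0, nu, h1, h2, fun β => hG1 i β, fun β => (hG2s i β).le,
      h5, h6, fun β => le_refl 0, h8, fun β => by rw [← hg1eq i ξ β]; exact h9 β,
      fun β => by simp, ?_⟩
    have hgrad1 : ∀ β, agentGrad i (fun ξ' => g1 i ξ' θ β) ξ
        = agentGrad i (fun ξ' => g1 i ξ' θstar β) ξ := by
      intro β
      unfold agentGrad
      congr 1
      ext y
      exact hg1eq i _ β
    have hz2 : (∑ β, lam2 β • agentGrad i (fun ξ' => g2 i ξ' θ β) ξ) = 0 := by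
      apply Finset.sum_eq_zero
      intro β _
      rw [hlam2 β, zero_smul]
    have hz2' : (∑ β, (0 : Fin (ng2 i) → ℝ) β • agentGrad i (fun ξ' => g2 i ξ' θstar β) ξ) = 0 := by
      apply Finset.sum_eq_zero
      intro β _
      simp
    rw [hz2']
    simp only [← hgrad1]
    rw [hz2] at hst
    simpa using hst
end
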